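/- arXiv:2504.16279 — 2 statements merged into one kernel-verified Lean document; each statement's English description precedes it below -/
import Mathlib

section
/- Let P_X and Q_X be probability distributions for a random vector X on a common standard measurable space, with 0 < δ(P_X, Q_X) < 1. Then there exist joint probability distributions P and Q for a pair (S, X), where S takes values in {0,1}, such that: P(S = 0) = Q(S = 0) = δ(P_X, Q_X) = δ(P, Q); the marginal distribution of X under P is P_X; the marginal distribution of X under Q is Q_X; and the conditional distribution of X given S = 1 is the same under P as under Q. -/
open MeasureTheory ProbabilityTheory

/-- Total variation distance between two measures: the supremum over measurable
sets `B` of `|P(B) - Q(B)|`. -/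
noncomputable def tvDist {α : Type*} [MeasurableSpace α] (P Q : Measure α) : ℝ :=
  ⨆ s : {s : Set α // MeasurableSet s}, |(P s.1).toReal - (Q s.1).toReal|

lemma tvDist_eq_of_hahn {α : Type*} [MeasurableSpace α] (P Q : Measure α)
    [IsProbabilityMeasure P] [IsProbabilityMeasure Q] {s : Set α} (hs : MeasurableSet s)
    (h1 : ∀ t, MeasurableSet t → t ⊆ s → Q t ≤ P t)
    (h2 : ∀ t, MeasurableSet t → t ⊆ sᶜ → P t ≤ Q t) :
    tvDist P Q = (P s).toReal - (Q s).toReal := by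
  have hQsP : (Q s).toReal ≤ (P s).toReal :=
    ENNReal.toReal_mono (measure_ne_top _ _) (h1 s hs subset_rfl)
  have hPc : (P sᶜ).toReal = 1 - (P s).toReal := by
    rw [prob_compl_eq_one_sub hs, ENNReal.toReal_sub_of_le prob_le_one ENNReal.one_ne_top,
      ENNReal.toReal_one]
  have hQc : (Q sᶜ).toReal = 1 - (Q s).toReal := by
    rw [prob_compl_eq_one_sub hs, ENNReal.toReal_sub_of_le prob_le_one ENNReal.one_ne_top,
      ENNReal.toReal_one]
  -- key ENNReal inequality 1 : P t + Q s ≤ P s + Q t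
  have key1 : ∀ t, MeasurableSet t → P t + Q s ≤ P s + Q t := by
    intro t ht
    have e1 : P t + Q s = (P (t ∩ s) + P (t \ s)) + (Q (s ∩ t) + Q (s \ t)) := by
      rw [measure_inter_add_diff t hs, measure_inter_add_diff s ht]
    have e2 : P s + Q t = (P (s ∩ t) + P (s \ t)) + (Q (t ∩ s) + Q (t \ s)) := by
      rw [measure_inter_add_diff s ht, measure_inter_add_diff t hs]
    rw [e1, e2, Set.inter_comm s t]
    have i1 : P (t \ s) ≤ Q (t \ s) := h2 _ (ht.diff hs) (fun x hx => hx.2)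
    have i2 : Q (s \ t) ≤ P (s \ t) := h1 _ (hs.diff ht) Set.diff_subset
    calc P (t ∩ s) + P (t \ s) + (Q (t ∩ s) + Q (s \ t))
        ≤ P (t ∩ s) + Q (t \ s) + (Q (t ∩ s) + P (s \ t)) :=
          add_le_add (add_le_add le_rfl i1) (add_le_add le_rfl i2)
      _ = P (t ∩ s) + P (s \ t) + (Q (t ∩ s) + Q (t \ s)) := by ring
  -- key ENNReal inequality 2 : Q t + P sᶜ ≤ Q sᶜ + P t
  have key2 : ∀ t, MeasurableSet t → Q t + P sᶜ ≤ Q sᶜ + P t := by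
    intro t ht
    have e1 : Q t + P sᶜ = (Q (t ∩ sᶜ) + Q (t \ sᶜ)) + (P (sᶜ ∩ t) + P (sᶜ \ t)) := by
      rw [measure_inter_add_diff t hs.compl, measure_inter_add_diff sᶜ ht]
    have e2 : Q sᶜ + P t = (Q (sᶜ ∩ t) + Q (sᶜ \ t)) + (P (t ∩ sᶜ) + P (t \ sᶜ)) := by
      rw [measure_inter_add_diff sᶜ ht, measure_inter_add_diff t hs.compl]
    rw [e1, e2, Set.inter_comm sᶜ t]
    have i1 : Q (t \ sᶜ) ≤ P (t \ sᶜ) := by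
      refine h1 _ (ht.diff hs.compl) ?_
      intro x hx; simpa using hx.2
    have i2 : P (sᶜ \ t) ≤ Q (sᶜ \ t) := h2 _ (hs.compl.diff ht) Set.diff_subset
    calc Q (t ∩ sᶜ) + Q (t \ sᶜ) + (P (t ∩ sᶜ) + P (sᶜ \ t))
        ≤ Q (t ∩ sᶜ) + P (t \ sᶜ) + (P (t ∩ sᶜ) + Q (sᶜ \ t)) :=
          add_le_add (add_le_add le_rfl i1) (add_le_add le_rfl i2)
      _ = Q (t ∩ sᶜ) + Q (sᶜ \ t) + (P (t ∩ sᶜ) + P (t \ sᶜ)) := by ring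
  -- real bound
  have hbound : ∀ t, MeasurableSet t →
      |(P t).toReal - (Q t).toReal| ≤ (P s).toReal - (Q s).toReal := by
    intro t ht
    have r1 : (P t).toReal + (Q s).toReal ≤ (P s).toReal + (Q t).toReal := by
      have := key1 t ht
      calc (P t).toReal + (Q s).toReal = (P t + Q s).toReal :=
            (ENNReal.toReal_add (measure_ne_top _ _) (measure_ne_top _ _)).symm
        _ ≤ (P s + Q t).toReal := ENNReal.toReal_mono
            (ENNReal.add_ne_top.2 ⟨measure_ne_top _ _, measure_ne_top _ _⟩) this
        _ = (P s).toReal + (Q t).toReal :=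
            ENNReal.toReal_add (measure_ne_top _ _) (measure_ne_top _ _)
    have r2 : (Q t).toReal + (P sᶜ).toReal ≤ (Q sᶜ).toReal + (P t).toReal := by
      have := key2 t ht
      calc (Q t).toReal + (P sᶜ).toReal = (Q t + P sᶜ).toReal :=
            (ENNReal.toReal_add (measure_ne_top _ _) (measure_ne_top _ _)).symm
        _ ≤ (Q sᶜ + P t).toReal := ENNReal.toReal_mono
            (ENNReal.add_ne_top.2 ⟨measure_ne_top _ _, measure_ne_top _ _⟩) this
        _ = (Q sᶜ).toReal + (P t).toReal :=
            ENNReal.toReal_add (measure_ne_top _ _) (measure_ne_top _ _)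
    rw [hPc, hQc] at r2
    rw [abs_le]
    constructor <;> linarith
  haveI : Nonempty {s : Set α // MeasurableSet s} := ⟨⟨∅, MeasurableSet.empty⟩⟩
  have hbdd : BddAbove (Set.range fun t : {s : Set α // MeasurableSet s} =>
      |(P t.1).toReal - (Q t.1).toReal|) := by
    refine ⟨(P s).toReal - (Q s).toReal, ?_⟩
    rintro x ⟨⟨t, ht⟩, rfl⟩
    exact hbound t ht
  refine le_antisymm (ciSup_le fun t => hbound t.1 t.2) ?_
  have := le_ciSup hbdd (⟨s, hs⟩ : {s : Set α // MeasurableSet s})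
  rwa [abs_of_nonneg (by linarith)] at this

/-- Any two distributions `P_X, Q_X` on a standard Borel space can be extended to
joint distributions `P, Q` of a pair `(S, X)` with `S ∈ {0,1}` (encoded by `Bool`,
with `false` playing the role of `0` and `true` of `1`) such that
`P(S=0) = Q(S=0) = δ(P_X,Q_X) = δ(P,Q)`, the `X`-marginals of `P` and `Q` are
`P_X` and `Q_X`, and the conditional laws of `X` given `S = 1` agree. -/
theorem exists_common_component_extension {α : Type*} [MeasurableSpace α]
    [StandardBorelSpace α]
    (PX QX : Measure α) [IsProbabilityMeasure PX] [IsProbabilityMeasure QX]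
    (h0 : 0 < tvDist PX QX) (h1 : tvDist PX QX < 1) :
    ∃ P Q : Measure (Bool × α), IsProbabilityMeasure P ∧ IsProbabilityMeasure Q ∧
      (P (Prod.fst ⁻¹' {false})).toReal = tvDist PX QX ∧
      (Q (Prod.fst ⁻¹' {false})).toReal = tvDist PX QX ∧
      tvDist P Q = tvDist PX QX ∧
      P.map Prod.snd = PX ∧
      Q.map Prod.snd = QX ∧
      (P[|Prod.fst ⁻¹' {true}]).map Prod.snd = (Q[|Prod.fst ⁻¹' {true}]).map Prod.snd := by
  obtain ⟨s, hs, hQP, hPQ⟩ := hahn_decomposition (μ := PX) (ν := QX)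
  have htv : tvDist PX QX = (PX s).toReal - (QX s).toReal := tvDist_eq_of_hahn PX QX hs hQP hPQ
  set f : α → Bool × α := fun a => (false, a) with hfdef
  set g : α → Bool × α := fun a => (true, a) with hgdef
  have hf : Measurable f := measurable_const.prodMk measurable_id
  have hg : Measurable g := measurable_const.prodMk measurable_id
  have hle_s : QX.restrict s ≤ PX.restrict s := by
    refine Measure.le_iff.2 fun t ht => ?_
    rw [Measure.restrict_apply ht, Measure.restrict_apply ht]
    exact hQP _ (ht.inter hs) Set.inter_subset_right
  have hle_c : PX.restrict sᶜ ≤ QX.restrict sᶜ := by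
    refine Measure.le_iff.2 fun t ht => ?_
    rw [Measure.restrict_apply ht, Measure.restrict_apply ht]
    exact hPQ _ (ht.inter hs.compl) Set.inter_subset_right
  set μP0 : Measure α := PX.restrict s - QX.restrict s with hμP0def
  set μQ0 : Measure α := QX.restrict sᶜ - PX.restrict sᶜ with hμQ0def
  set νc : Measure α := QX.restrict s + PX.restrict sᶜ with hνcdef
  have hμP0 : ∀ t, MeasurableSet t → μP0 t = PX (t ∩ s) - QX (t ∩ s) := by
    intro t ht
    rw [hμP0def, Measure.sub_apply ht hle_s, Measure.restrict_apply ht, Measure.restrict_apply ht]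
  have hμQ0 : ∀ t, MeasurableSet t → μQ0 t = QX (t ∩ sᶜ) - PX (t ∩ sᶜ) := by
    intro t ht
    rw [hμQ0def, Measure.sub_apply ht hle_c, Measure.restrict_apply ht, Measure.restrict_apply ht]
  set P : Measure (Bool × α) := μP0.map f + νc.map g with hPdef
  set Q : Measure (Bool × α) := μQ0.map f + νc.map g with hQdef
  have hPapp : ∀ B : Set (Bool × α), MeasurableSet B → P B = μP0 (f ⁻¹' B) + νc (g ⁻¹' B) := by
    intro B hB
    rw [hPdef, Measure.add_apply, Measure.map_apply hf hB, Measure.map_apply hg hB]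
  have hQapp : ∀ B : Set (Bool × α), MeasurableSet B → Q B = μQ0 (f ⁻¹' B) + νc (g ⁻¹' B) := by
    intro B hB
    rw [hQdef, Measure.add_apply, Measure.map_apply hf hB, Measure.map_apply hg hB]
  have hQXs : QX s ≤ PX s := hQP s hs subset_rfl
  have hPXc : PX sᶜ ≤ QX sᶜ := hPQ sᶜ hs.compl subset_rfl
  have hμP0univ : μP0 Set.univ = PX s - QX s := by
    rw [hμP0 _ MeasurableSet.univ, Set.univ_inter]
  have hμQ0univ : μQ0 Set.univ = QX sᶜ - PX sᶜ := by
    rw [hμQ0 _ MeasurableSet.univ, Set.univ_inter]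
  have hνcuniv : νc Set.univ = QX s + PX sᶜ := by
    rw [hνcdef, Measure.add_apply, Measure.restrict_apply MeasurableSet.univ,
      Measure.restrict_apply MeasurableSet.univ, Set.univ_inter, Set.univ_inter]
  have hpc : (PX sᶜ).toReal = 1 - (PX s).toReal := by
    rw [prob_compl_eq_one_sub hs, ENNReal.toReal_sub_of_le prob_le_one ENNReal.one_ne_top,
      ENNReal.toReal_one]
  have hqc : (QX sᶜ).toReal = 1 - (QX s).toReal := by
    rw [prob_compl_eq_one_sub hs, ENNReal.toReal_sub_of_le prob_le_one ENNReal.one_ne_top,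
      ENNReal.toReal_one]
  haveI hPprob : IsProbabilityMeasure P := by
    constructor
    rw [hPapp _ MeasurableSet.univ, Set.preimage_univ, Set.preimage_univ, hμP0univ, hνcuniv,
      ← add_assoc, tsub_add_cancel_of_le hQXs, measure_add_measure_compl hs, measure_univ]
  haveI hQprob : IsProbabilityMeasure Q := by
    constructor
    rw [hQapp _ MeasurableSet.univ, Set.preimage_univ, Set.preimage_univ, hμQ0univ, hνcuniv,
      add_comm (QX s) (PX sᶜ), ← add_assoc, tsub_add_cancel_of_le hPXc, add_comm,
      measure_add_measure_compl hs, measure_univ]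
  -- the event S = 0
  have hF : MeasurableSet (Prod.fst ⁻¹' {false} : Set (Bool × α)) :=
    measurable_fst (measurableSet_singleton false)
  have hfF : f ⁻¹' (Prod.fst ⁻¹' {false}) = Set.univ := by ext a; simp [hfdef]
  have hgF : g ⁻¹' (Prod.fst ⁻¹' {false}) = ∅ := by ext a; simp [hgdef]
  have hPF : (P (Prod.fst ⁻¹' {false})).toReal = tvDist PX QX := by
    rw [hPapp _ hF, hfF, hgF, measure_empty, add_zero, hμP0univ,
      ENNReal.toReal_sub_of_le hQXs (measure_ne_top _ _), htv]
  have hQF : (Q (Prod.fst ⁻¹' {false})).toReal = tvDist PX QX := by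
    rw [hQapp _ hF, hfF, hgF, measure_empty, add_zero, hμQ0univ,
      ENNReal.toReal_sub_of_le hPXc (measure_ne_top _ _), hqc, hpc, htv]
    ring
  -- tvDist P Q
  have hB : MeasurableSet (({false} : Set Bool) ×ˢ s) := (MeasurableSet.singleton false).prod hs
  have hPQtv : tvDist P Q = tvDist PX QX := by
    have h1' : ∀ T, MeasurableSet T → T ⊆ ({false} : Set Bool) ×ˢ s → Q T ≤ P T := by
      intro T hT hTB
      have hz : μQ0 (f ⁻¹' T) = 0 := by
        rw [hμQ0 _ (hf hT)]
        have he : f ⁻¹' T ∩ sᶜ = ∅ := by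
          refine Set.eq_empty_iff_forall_notMem.2 fun a ha => ?_
          have := hTB ha.1
          rw [hfdef] at this
          simp only [Set.mem_prod, Set.mem_singleton_iff] at this
          exact ha.2 this.2
        simp [he]
      rw [hQapp _ hT, hPapp _ hT, hz, zero_add]
      exact self_le_add_left _ _
    have h2' : ∀ T, MeasurableSet T → T ⊆ (({false} : Set Bool) ×ˢ s)ᶜ → P T ≤ Q T := by
      intro T hT hTB
      have hz : μP0 (f ⁻¹' T) = 0 := by
        rw [hμP0 _ (hf hT)]
        have he : f ⁻¹' T ∩ s = ∅ := by
          refine Set.eq_empty_iff_forall_notMem.2 fun a ha => ?_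
          have := hTB ha.1
          rw [hfdef] at this
          simp only [Set.mem_compl_iff, Set.mem_prod, Set.mem_singleton_iff, true_and] at this
          exact this ha.2
        simp [he]
      rw [hQapp _ hT, hPapp _ hT, hz, zero_add]
      exact self_le_add_left _ _
    have hfB : f ⁻¹' (({false} : Set Bool) ×ˢ s) = s := by ext a; simp [hfdef]
    have hgB : g ⁻¹' (({false} : Set Bool) ×ˢ s) = ∅ := by ext a; simp [hgdef]
    have hPB : P (({false} : Set Bool) ×ˢ s) = PX s - QX s := by
      rw [hPapp _ hB, hfB, hgB, measure_empty, add_zero, hμP0 _ hs, Set.inter_self]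
    have hQB : Q (({false} : Set Bool) ×ˢ s) = 0 := by
      rw [hQapp _ hB, hfB, hgB, measure_empty, add_zero, hμQ0 _ hs, Set.inter_compl_self]
      simp
    rw [tvDist_eq_of_hahn P Q hB h1' h2', hPB, hQB,
      ENNReal.toReal_sub_of_le hQXs (measure_ne_top _ _), htv]
    simp
  -- marginals
  have hPmarg : P.map Prod.snd = PX := by
    rw [hPdef, Measure.map_add _ _ measurable_snd, Measure.map_map measurable_snd hf,
      Measure.map_map measurable_snd hg]
    have h1 : Prod.snd ∘ f = id := rfl
    have h2 : Prod.snd ∘ g = id := rfl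
    rw [h1, h2, Measure.map_id, Measure.map_id, hμP0def, hνcdef, ← add_assoc,
      Measure.sub_add_cancel_of_le hle_s, Measure.restrict_add_restrict_compl hs]
  have hQmarg : Q.map Prod.snd = QX := by
    rw [hQdef, Measure.map_add _ _ measurable_snd, Measure.map_map measurable_snd hf,
      Measure.map_map measurable_snd hg]
    have h1 : Prod.snd ∘ f = id := rfl
    have h2 : Prod.snd ∘ g = id := rfl
    rw [h1, h2, Measure.map_id, Measure.map_id, hμQ0def, hνcdef,
      add_comm (QX.restrict s) (PX.restrict sᶜ), ← add_assoc,
      Measure.sub_add_cancel_of_le hle_c, add_comm, Measure.restrict_add_restrict_compl hs]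
  -- conditional laws
  have hT : MeasurableSet (Prod.fst ⁻¹' {true} : Set (Bool × α)) :=
    measurable_fst (measurableSet_singleton true)
  have hfT : f ⁻¹' (Prod.fst ⁻¹' {true}) = ∅ := by ext a; simp [hfdef]
  have hgT : g ⁻¹' (Prod.fst ⁻¹' {true}) = Set.univ := by ext a; simp [hgdef]
  have hPrest : P.restrict (Prod.fst ⁻¹' {true}) = νc.map g := by
    rw [hPdef, Measure.restrict_add, Measure.restrict_map hf hT, Measure.restrict_map hg hT,
      hfT, hgT, Measure.restrict_empty, Measure.map_zero, zero_add, Measure.restrict_univ]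
  have hQrest : Q.restrict (Prod.fst ⁻¹' {true}) = νc.map g := by
    rw [hQdef, Measure.restrict_add, Measure.restrict_map hf hT, Measure.restrict_map hg hT,
      hfT, hgT, Measure.restrict_empty, Measure.map_zero, zero_add, Measure.restrict_univ]
  have hPT : P (Prod.fst ⁻¹' {true}) = νc Set.univ := by
    rw [hPapp _ hT, hfT, hgT, measure_empty, zero_add]
  have hQT : Q (Prod.fst ⁻¹' {true}) = νc Set.univ := by
    rw [hQapp _ hT, hfT, hgT, measure_empty, zero_add]
  have hcond : (P[|Prod.fst ⁻¹' {true}]).map Prod.snd = (Q[|Prod.fst ⁻¹' {true}]).map Prod.snd := by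
    have e1 : P[|Prod.fst ⁻¹' {true}] = (νc Set.univ)⁻¹ • νc.map g := by
      show (P (Prod.fst ⁻¹' {true}))⁻¹ • P.restrict (Prod.fst ⁻¹' {true}) = _
      rw [hPT, hPrest]
    have e2 : Q[|Prod.fst ⁻¹' {true}] = (νc Set.univ)⁻¹ • νc.map g := by
      show (Q (Prod.fst ⁻¹' {true}))⁻¹ • Q.restrict (Prod.fst ⁻¹' {true}) = _
      rw [hQT, hQrest]
    rw [e1, e2]
  exact ⟨P, Q, hPprob, hQprob, hPF, hQF, hPQtv, hPmarg, hQmarg, hcond⟩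
end

section
/- Let λ be a real number and let a, θ be real numbers with |λ| ≤ a and 0 < 2aθ < 1. Then −(1/2)·log(1 − 2λθ) ≤ λθ + (λθ)² / (1 − 2aθ). -/
private lemma aux_pos (x : ℝ) (hx0 : 0 ≤ x) (hx1 : x < 1) :
    -Real.log (1 - x) ≤ x + x ^ 2 / (2 * (1 - x)) := by
  set g : ℝ → ℝ := fun t => t + t ^ 2 / (2 * (1 - t)) + Real.log (1 - t) with hg
  have hder : ∀ t : ℝ, t < 1 → HasDerivAt g (t ^ 2 / (2 * (1 - t) ^ 2)) t := by
    intro t ht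
    have h1 : (1 : ℝ) - t ≠ 0 := by linarith
    have hlog : HasDerivAt (fun t : ℝ => Real.log (1 - t)) (-1 / (1 - t)) t :=
      (((hasDerivAt_id t).const_sub 1).log h1)
    have hdiv : HasDerivAt (fun t : ℝ => t ^ 2 / (2 * (1 - t)))
        ((2 * t ^ 1 * (2 * (1 - t)) - t ^ 2 * (2 * (-1))) / (2 * (1 - t)) ^ 2) t :=
      (hasDerivAt_pow 2 t).div (((hasDerivAt_id t).const_sub 1).const_mul 2)
        (by simp [h1])
    have := ((hasDerivAt_id t).add hdiv).add hlog
    refine this.congr_deriv ?_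
    field_simp
    ring
  have hmono : MonotoneOn g (Set.Icc 0 x) := by
    apply monotoneOn_of_deriv_nonneg (convex_Icc 0 x)
    · intro t ht
      exact (hder t (lt_of_le_of_lt ht.2 hx1)).continuousAt.continuousWithinAt
    · intro t ht
      rw [interior_Icc] at ht
      exact (hder t (lt_of_lt_of_le ht.2 hx1.le)).differentiableAt.differentiableWithinAt
    · intro t ht
      rw [interior_Icc] at ht
      rw [(hder t (lt_of_lt_of_le ht.2 hx1.le)).deriv]
      positivity
  have h0 : g 0 = 0 := by simp [hg]
  have := hmono (Set.left_mem_Icc.2 hx0) (Set.right_mem_Icc.2 hx0) hx0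
  rw [h0] at this
  simp only [hg] at this
  linarith

private lemma aux_neg (x : ℝ) (hx0 : x ≤ 0) :
    -Real.log (1 - x) ≤ x + x ^ 2 / 2 := by
  set g : ℝ → ℝ := fun t => t + t ^ 2 / 2 + Real.log (1 - t) with hg
  have hder : ∀ t : ℝ, t < 1 → HasDerivAt g (1 + t + -1 / (1 - t)) t := by
    intro t ht
    have h1 : (1 : ℝ) - t ≠ 0 := by linarith
    have hlog : HasDerivAt (fun t : ℝ => Real.log (1 - t)) (-1 / (1 - t)) t :=
      (((hasDerivAt_id t).const_sub 1).log h1)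
    have hsq : HasDerivAt (fun t : ℝ => t ^ 2 / 2) t t := by
      have := (hasDerivAt_pow 2 t).div_const 2
      refine this.congr_deriv ?_
      ring
    have := ((hasDerivAt_id t).add hsq).add hlog
    exact this
  have hanti : AntitoneOn g (Set.Icc x 0) := by
    apply antitoneOn_of_deriv_nonpos (convex_Icc x 0)
    · intro t ht
      exact (hder t (lt_of_le_of_lt ht.2 one_pos)).continuousAt.continuousWithinAt
    · intro t ht
      rw [interior_Icc] at ht
      exact (hder t (lt_of_lt_of_le ht.2 zero_le_one)).differentiableAt.differentiableWithinAt
    · intro t ht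
      rw [interior_Icc] at ht
      have ht1 : t < 1 := lt_of_lt_of_le ht.2 (by linarith)
      rw [(hder t ht1).deriv]
      have h1 : (0 : ℝ) < 1 - t := by linarith
      have : (1 : ℝ) + t ≤ 1 / (1 - t) := by
        rw [le_div_iff₀ h1]
        nlinarith [sq_nonneg t]
      have hneg : -1 / (1 - t) = -(1 / (1 - t)) := by ring
      linarith [hneg ▸ le_refl ((-1 : ℝ) / (1 - t)), this]
  have h0 : g 0 = 0 := by simp [hg]
  have := hanti (Set.left_mem_Icc.2 hx0) (Set.right_mem_Icc.2 hx0) hx0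
  rw [h0] at this
  simp only [hg] at this
  linarith

private lemma key_ineq (x : ℝ) (hx : |x| < 1) :
    -Real.log (1 - x) ≤ x + x ^ 2 / (2 * (1 - |x|)) := by
  rcases le_or_gt 0 x with h | h
  · rw [abs_of_nonneg h]
    exact aux_pos x h (by rwa [abs_of_nonneg h] at hx)
  · rw [abs_of_neg h]
    have h2 : x ^ 2 / 2 ≤ x ^ 2 / (2 * (1 - -x)) := by
      apply div_le_div_of_nonneg_left (sq_nonneg x)
      · have : -x < 1 := by rwa [abs_of_neg h] at hx
        nlinarith
      · nlinarith
    linarith [aux_neg x h.le]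

/-- Elementary logarithm inequality used in the proof of the Gaussian
Hanson-Wright inequality. -/
theorem neg_half_log_le (lam a θ : ℝ) (hla : |lam| ≤ a)
    (h0 : 0 < 2 * a * θ) (h1 : 2 * a * θ < 1) :
    -(1 / 2) * Real.log (1 - 2 * lam * θ) ≤ lam * θ + (lam * θ) ^ 2 / (1 - 2 * a * θ) := by
  have ha : 0 < a := by
    rcases lt_or_ge 0 a with h | h
    · exact h
    · exfalso
      have : a = 0 := le_antisymm h ((abs_nonneg lam).trans hla)
      rw [this] at h0; simp at h0
  have hθ : 0 < θ := by nlinarith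
  set x := 2 * lam * θ with hx
  have hxabs : |x| = 2 * |lam| * θ := by
    rw [hx, abs_mul, abs_mul, abs_of_nonneg hθ.le, abs_of_nonneg (by norm_num : (0:ℝ) ≤ 2)]
  have hxlt : |x| < 1 := by rw [hxabs]; nlinarith
  have key := key_ineq x hxlt
  have hd1 : 0 < 1 - |x| := by linarith
  have hd2 : 0 < 1 - 2 * a * θ := by linarith
  have hle : 1 - 2 * a * θ ≤ 1 - |x| := by rw [hxabs]; nlinarith
  have h3 : x ^ 2 / (2 * (1 - |x|)) = 2 * ((lam * θ) ^ 2 / (1 - |x|)) := by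
    rw [hx]; field_simp
  have h4 : (lam * θ) ^ 2 / (1 - |x|) ≤ (lam * θ) ^ 2 / (1 - 2 * a * θ) :=
    div_le_div_of_nonneg_left (sq_nonneg _) hd2 hle
  have h5 : -Real.log (1 - x) ≤ 2 * (lam * θ) + 2 * ((lam * θ) ^ 2 / (1 - |x|)) := by
    rw [← h3]; have : x = 2 * (lam * θ) := by rw [hx]; ring
    linarith [key]
  have hxx : 1 - 2 * lam * θ = 1 - x := by rw [hx]
  rw [hxx]
  linarith
end
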